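/- arXiv:2003.04375 — 8 statements merged into one kernel-verified Lean document; each statement's English description precedes it below -/
import Mathlib

section
/- The function f is γ-weakly convex on 𝒳: for every x ∈ 𝒳, every ξ in the Fréchet subdifferential ∂f(x), and every d ∈ 𝕏 with x + d ∈ 𝒳, one has f(x + d) − f(x) − ⟨ξ, d⟩ ≥ −(γ/2)‖d‖². -/
open Filter Topology Set

/-- The Fréchet subdifferential of `f` at `x`. -/
def frechetSubdiff {X : Type*} [NormedAddCommGroup X] [NormedSpace ℝ X]
    (f : X → ℝ) (x : X) : Set (X →L[ℝ] ℝ) :=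
  {ξ | ∀ ε > (0 : ℝ), ∀ᶠ h in 𝓝[≠] (0 : X), -(ε * ‖h‖) ≤ f (x + h) - f x - ξ h}

/-- If `Φ(·,y)` is `γ`-weakly convex on `𝒳` for every `y ∈ 𝒴`, then the max-function
`f x = max_{y ∈ 𝒴} (Φ x y - g y)` is `γ`-weakly convex on `𝒳`: for every `x ∈ 𝒳`,
`ξ ∈ ∂f(x)` and `d` with `x + d ∈ 𝒳`, `f(x+d) - f(x) - ⟨ξ,d⟩ ≥ -(γ/2)‖d‖²`. -/
theorem max_function_weakly_convex
    {X Y : Type*} [NormedAddCommGroup X] [NormedSpace ℝ X] [FiniteDimensional ℝ X]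
    [NormedAddCommGroup Y] [NormedSpace ℝ Y] [FiniteDimensional ℝ Y]
    (𝒳 𝒳' : Set X) (𝒴 : Set Y)
    (h𝒳ne : 𝒳.Nonempty) (h𝒳cl : IsClosed 𝒳) (h𝒳cv : Convex ℝ 𝒳)
    (h𝒳'open : IsOpen 𝒳') (h𝒳sub : 𝒳 ⊆ 𝒳')
    (h𝒴ne : 𝒴.Nonempty) (h𝒴cv : Convex ℝ 𝒴) (h𝒴cp : IsCompact 𝒴)
    (g : Y → ℝ) (hgcv : ConvexOn ℝ 𝒴 g) (hgc : ContinuousOn g 𝒴)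
    (Φ : X → Y → ℝ)
    (hΦc : ContinuousOn (fun p : X × Y => Φ p.1 p.2) (𝒳' ×ˢ 𝒴))
    (Φx : X → Y → X →L[ℝ] ℝ)
    (hΦx : ∀ y ∈ 𝒴, ∀ x ∈ 𝒳', HasFDerivAt (fun x' => Φ x' y) (Φx x y) x)
    (hΦxc : ∀ x ∈ 𝒳', ContinuousOn (fun y => Φx x y) 𝒴)
    (γ : ℝ) (hγ : 0 < γ)
    (hweak : ∀ x ∈ 𝒳, ∀ x' ∈ 𝒳, ∀ y ∈ 𝒴,
      -(γ / 2) * ‖x' - x‖ ^ 2 ≤ Φ x' y - Φ x y - Φx x y (x' - x))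
    (f : X → ℝ)
    (hf : ∀ x ∈ 𝒳', IsGreatest ((fun y => Φ x y - g y) '' 𝒴) (f x)) :
    ∀ x ∈ 𝒳, ∀ ξ ∈ frechetSubdiff f x, ∀ d : X, x + d ∈ 𝒳 →
      -(γ / 2) * ‖d‖ ^ 2 ≤ f (x + d) - f x - ξ d := by
  intro x hx ξ hξ d hxd
  by_cases hd : d = 0
  · simp [hd]
  have hdn : (0:ℝ) < ‖d‖ := norm_pos_iff.mpr hd
  -- key convexity-type estimate
  have key : ∀ t : ℝ, 0 < t → t < 1 →
      f (x + t • d) ≤ (1 - t) * f x + t * f (x + d) + γ / 2 * ‖d‖ ^ 2 * t := by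
    intro t ht ht1
    have hxt : x + t • d ∈ 𝒳 := by
      have heq : (1 - t) • x + t • (x + d) = x + t • d := by
        rw [smul_add, sub_smul, one_smul]; abel
      have := h𝒳cv hx hxd (by linarith : (0:ℝ) ≤ 1 - t) ht.le (by ring)
      rwa [heq] at this
    obtain ⟨y, hy, hyeq⟩ := (hf _ (h𝒳sub hxt)).1
    have hA := hweak _ hxt x hx y hy
    have hB := hweak _ hxt _ hxd y hy
    have e1 : x - (x + t • d) = (-t) • d := by
      simp [neg_smul]
    have e2 : x + d - (x + t • d) = (1 - t) • d := by
      rw [sub_smul, one_smul]; abel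
    rw [e1] at hA
    rw [e2] at hB
    simp only [map_smul, smul_eq_mul] at hA hB
    have n1 : ‖(-t) • d‖ = t * ‖d‖ := by
      rw [norm_smul, Real.norm_eq_abs, abs_neg, abs_of_pos ht]
    have n2 : ‖(1 - t) • d‖ = (1 - t) * ‖d‖ := by
      rw [norm_smul, Real.norm_eq_abs, abs_of_pos (by linarith)]
    rw [n1] at hA
    rw [n2] at hB
    have hfx : Φ x y - g y ≤ f x := (hf x (h𝒳sub hx)).2 ⟨y, hy, rfl⟩
    have hfxd : Φ (x + d) y - g y ≤ f (x + d) := (hf _ (h𝒳sub hxd)).2 ⟨y, hy, rfl⟩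
    have hfv : f (x + t • d) = Φ (x + t • d) y - g y := hyeq.symm
    rw [hfv]
    -- combine (1-t)*hA + t*hB
    nlinarith [mul_le_mul_of_nonneg_left hA (by linarith : (0:ℝ) ≤ 1 - t),
      mul_le_mul_of_nonneg_left hB ht.le, sq_nonneg ‖d‖, mul_pos ht hdn]
  -- now use the subdifferential along t • d
  have main : ∀ ε > (0:ℝ), ξ d ≤ f (x + d) - f x + γ / 2 * ‖d‖ ^ 2 + ε := by
    intro ε hε
    have hξ' := hξ (ε / ‖d‖) (by positivity)
    -- t • d tends to 0 within {0}ᶜ as t → 0⁺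
    have htend : Tendsto (fun t : ℝ => t • d) (𝓝[>] (0:ℝ)) (𝓝[≠] (0:X)) := by
      apply tendsto_nhdsWithin_of_tendsto_nhds_of_eventually_within
      · have : Tendsto (fun t : ℝ => t • d) (𝓝 (0:ℝ)) (𝓝 ((0:ℝ) • d)) :=
          (continuous_id.smul continuous_const).tendsto 0
        rw [zero_smul] at this
        exact this.mono_left nhdsWithin_le_nhds
      · filter_upwards [self_mem_nhdsWithin] with t ht
        simp only [mem_compl_iff, mem_singleton_iff]
        exact smul_ne_zero (ne_of_gt ht) hd
    have hev : ∀ᶠ t : ℝ in 𝓝[>] (0:ℝ),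
        -(ε / ‖d‖ * ‖t • d‖) ≤ f (x + t • d) - f x - ξ (t • d) := htend.eventually hξ'
    have hlt1 : ∀ᶠ t : ℝ in 𝓝[>] (0:ℝ), t < 1 :=
      eventually_nhdsWithin_of_eventually_nhds (Filter.Tendsto.eventually_lt_const one_pos tendsto_id)
    obtain ⟨t, h1, h2, ht⟩ := (hev.and (hlt1.and self_mem_nhdsWithin)).exists
    have ht : 0 < t := ht
    have hnorm : ‖t • d‖ = t * ‖d‖ := by
      rw [norm_smul, Real.norm_eq_abs, abs_of_pos ht]
    rw [hnorm, map_smul] at h1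
    have hk := key t ht h2
    have : t * ξ d ≤ t * (f (x + d) - f x + γ / 2 * ‖d‖ ^ 2 + ε) := by
      have hεd : ε / ‖d‖ * (t * ‖d‖) = t * ε := by
        field_simp
      rw [hεd] at h1
      simp only [smul_eq_mul] at h1
      nlinarith
    exact le_of_mul_le_mul_left (by linarith [this]) ht
  have := le_of_forall_pos_le_add main
  linarith
end

section
/- For every ρ > 0 and every x ∈ 𝒳, the distance from ∇f_ρ(x) = ∇ₓΦ(x, y*_ρ(x)) to the set ∂f(x) = closure(convexHull{∇ₓΦ(x,y) : y ∈ 𝒴*(x)}) satisfies dist(∇f_ρ(x), ∂f(x)) ≤ L_xy · dist(y*_ρ(x), 𝒴*(x)) ≤ L_xy · D_𝒴, where D_𝒴 = sup_{y,y'∈𝒴} ‖y − y'‖ < +∞ is the diameter of 𝒴. -/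
open Filter Topology Set

/-- For `ρ > 0` and `x ∈ 𝒳`,
`dist(∇f_ρ(x), ∂f(x)) ≤ L_xy · dist(y*_ρ(x), 𝒴*(x)) ≤ L_xy · diam 𝒴`, where
`∂f(x) = closure (convexHull {∇ₓΦ(x,y) : y ∈ 𝒴*(x)})` and `∇f_ρ(x) = ∇ₓΦ(x, y*_ρ(x))`. -/
theorem dist_smoothed_grad_to_subdiff
    {X Y : Type*} [NormedAddCommGroup X] [NormedSpace ℝ X] [FiniteDimensional ℝ X]
    [NormedAddCommGroup Y] [NormedSpace ℝ Y] [FiniteDimensional ℝ Y]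
    (𝒳 𝒳' : Set X) (𝒴 : Set Y)
    (h𝒳ne : 𝒳.Nonempty) (h𝒳cl : IsClosed 𝒳) (h𝒳cv : Convex ℝ 𝒳)
    (h𝒳'open : IsOpen 𝒳') (h𝒳sub : 𝒳 ⊆ 𝒳')
    (h𝒴ne : 𝒴.Nonempty) (h𝒴cv : Convex ℝ 𝒴) (h𝒴cp : IsCompact 𝒴)
    (g : Y → ℝ) (hgcv : ConvexOn ℝ 𝒴 g) (hgc : ContinuousOn g 𝒴)
    (Φ : X → Y → ℝ)
    (hΦc : ContinuousOn (fun p : X × Y => Φ p.1 p.2) (𝒳' ×ˢ 𝒴))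
    (hΦconc : ∀ x ∈ 𝒳', ConcaveOn ℝ 𝒴 (Φ x))
    (Φx : X → Y → X →L[ℝ] ℝ)
    (hΦx : ∀ y ∈ 𝒴, ∀ x ∈ 𝒳', HasFDerivAt (fun x' => Φ x' y) (Φx x y) x)
    (Lxy : ℝ)
    (hLxy : ∀ x ∈ 𝒳, ∀ y ∈ 𝒴, ∀ y' ∈ 𝒴, ‖Φx x y - Φx x y'‖ ≤ Lxy * ‖y - y'‖)
    (f : X → ℝ)
    (hf : ∀ x ∈ 𝒳', IsGreatest ((fun y => Φ x y - g y) '' 𝒴) (f x))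
    (Ystar : X → Set Y)
    (hYstar : ∀ x, Ystar x = {y ∈ 𝒴 | f x = Φ x y - g y})
    (ω : Y → ℝ) (hωc : ContinuousOn ω 𝒴) (hωsc : StrongConvexOn 𝒴 1 ω)
    (ρ : ℝ) (hρ : 0 < ρ)
    (yρ : X → Y)
    (hyρmem : ∀ x ∈ 𝒳, yρ x ∈ 𝒴)
    (hyρmax : ∀ x ∈ 𝒳, ∀ y ∈ 𝒴,
      Φ x y - g y - ρ * ω y ≤ Φ x (yρ x) - g (yρ x) - ρ * ω (yρ x))
    (hyρuniq : ∀ x ∈ 𝒳, ∀ y ∈ 𝒴,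
      Φ x y - g y - ρ * ω y = Φ x (yρ x) - g (yρ x) - ρ * ω (yρ x) → y = yρ x) :
    ∀ x ∈ 𝒳,
      Metric.infDist (Φx x (yρ x))
          (closure (convexHull ℝ ((fun y => Φx x y) '' Ystar x))) ≤
        Lxy * Metric.infDist (yρ x) (Ystar x) ∧
      Lxy * Metric.infDist (yρ x) (Ystar x) ≤ Lxy * Metric.diam 𝒴 := by
  intro x hx
  have hx' : x ∈ 𝒳' := h𝒳sub hx
  -- continuity of y ↦ Φ x y - g y on 𝒴
  have hΦxc : ContinuousOn (fun y => Φ x y) 𝒴 := by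
    have : ContinuousOn (fun y : Y => (x, y)) 𝒴 :=
      (continuous_const.prodMk continuous_id).continuousOn
    exact hΦc.comp this (fun y hy => ⟨hx', hy⟩)
  have hcont : ContinuousOn (fun y => Φ x y - g y) 𝒴 := hΦxc.sub hgc
  -- Ystar x is nonempty
  have hYne : (Ystar x).Nonempty := by
    obtain ⟨⟨y, hy𝒴, hfy⟩, -⟩ := hf x hx'
    exact ⟨y, by rw [hYstar]; exact ⟨hy𝒴, hfy.symm⟩⟩
  have hYsub : Ystar x ⊆ 𝒴 := by rw [hYstar]; exact fun y hy => hy.1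
  -- Ystar x is compact
  have hYcl : IsClosed (Ystar x) := by
    rw [hYstar]
    have : ({y ∈ 𝒴 | f x = Φ x y - g y} : Set Y)
        = 𝒴 ∩ (fun y => Φ x y - g y) ⁻¹' {f x} := by
      ext y; simp [eq_comm, Set.mem_preimage]
    rw [this]
    exact hcont.preimage_isClosed_of_isClosed h𝒴cp.isClosed isClosed_singleton
  have hYcp : IsCompact (Ystar x) := h𝒴cp.of_isClosed_subset hYcl hYsub
  -- nearest point y* in Ystar x to yρ x
  obtain ⟨ystar, hystar, hdist⟩ := hYcp.exists_infDist_eq_dist hYne (yρ x)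
  have hystar𝒴 : ystar ∈ 𝒴 := hYsub hystar
  have hyρ𝒴 : yρ x ∈ 𝒴 := hyρmem x hx
  -- first inequality
  have hmem : Φx x ystar ∈ closure (convexHull ℝ ((fun y => Φx x y) '' Ystar x)) :=
    subset_closure (subset_convexHull ℝ _ ⟨ystar, hystar, rfl⟩)
  have h1 : Metric.infDist (Φx x (yρ x))
      (closure (convexHull ℝ ((fun y => Φx x y) '' Ystar x))) ≤
      Lxy * Metric.infDist (yρ x) (Ystar x) := by
    have step1 : Metric.infDist (Φx x (yρ x))
        (closure (convexHull ℝ ((fun y => Φx x y) '' Ystar x)))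
        ≤ dist (Φx x (yρ x)) (Φx x ystar) := Metric.infDist_le_dist_of_mem hmem
    have step2 : dist (Φx x (yρ x)) (Φx x ystar) ≤ Lxy * ‖yρ x - ystar‖ := by
      rw [dist_eq_norm]; exact hLxy x hx _ hyρ𝒴 _ hystar𝒴
    have step3 : Lxy * ‖yρ x - ystar‖ = Lxy * Metric.infDist (yρ x) (Ystar x) := by
      rw [hdist, dist_eq_norm]
    linarith
  refine ⟨h1, ?_⟩
  -- second inequality
  rcases eq_or_ne (Metric.diam 𝒴) 0 with hd | hd
  · -- 𝒴 is a subsingleton, so yρ x = ystar and infDist = 0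
    have hsub : 𝒴.Subsingleton := by
      intro a ha b hb
      have := Metric.dist_le_diam_of_mem h𝒴cp.isBounded ha hb
      rw [hd] at this
      exact dist_le_zero.mp this
    have : yρ x = ystar := hsub hyρ𝒴 hystar𝒴
    rw [hdist, this, dist_self, hd]
  · -- 𝒴 has two distinct points, so Lxy ≥ 0
    have : ¬ 𝒴.Subsingleton := by
      intro hsub
      exact hd (by
        rcases Set.Subsingleton.eq_empty_or_singleton hsub with h | ⟨a, h⟩
        · simp [h]
        · simp [h])
    obtain ⟨a, ha, b, hb, hab⟩ := Set.not_subsingleton_iff.mp this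
    have hLnn : 0 ≤ Lxy := by
      have h1 := hLxy x hx a ha b hb
      have h2 : (0 : ℝ) < ‖a - b‖ := by
        rw [norm_pos_iff]; exact sub_ne_zero_of_ne hab
      nlinarith [norm_nonneg (Φx x a - Φx x b)]
    have hle : Metric.infDist (yρ x) (Ystar x) ≤ Metric.diam 𝒴 := by
      rw [hdist]
      exact Metric.dist_le_diam_of_mem h𝒴cp.isBounded hyρ𝒴 hystar𝒴
    exact mul_le_mul_of_nonneg_left hle hLnn
end

section
/- Let ε, λ > 0 and let x ∈ 𝒳 with ∇ω_𝒳 differentiable at x, and let x̂ = prox(q,x,λ) be the unique minimizer over 𝒳 of x' ↦ q(x') + λ⁻¹D_{ω_𝒳}(x',x). If ‖x − x̂‖ ≤ ελ/β_𝒳, then: (i) the vector ξ = λ⁻¹(∇ω_𝒳(x) − ∇ω_𝒳(x̂)) belongs to the Fréchet subdifferential of q + ι_𝒳 at x̂ and satisfies ‖ξ‖ ≤ ε (hence dist(0, ∂(q+ι_𝒳)(x̂)) ≤ ε); and (ii) λ⁻¹‖(∇²ω_𝒳(x))(x − x̂)‖ ≤ ε. -/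
open Filter Topology Set

/-- If `x ∈ 𝒳` satisfies `‖x - prox(q,x,λ)‖ ≤ ελ/β_𝒳`, then
`ξ = λ⁻¹(∇ω_𝒳(x) - ∇ω_𝒳(x̂))` is a Fréchet subgradient of `q + ι_𝒳` at `x̂` with `‖ξ‖ ≤ ε`
(so `dist(0, ∂(q+ι_𝒳)(x̂)) ≤ ε`), and `λ⁻¹‖(∇²ω_𝒳(x))(x - x̂)‖ ≤ ε`. -/
theorem near_stationary_of_prox_close
    {X : Type*} [NormedAddCommGroup X] [NormedSpace ℝ X] [FiniteDimensional ℝ X]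
    (𝒳 : Set X) (h𝒳ne : 𝒳.Nonempty) (h𝒳cl : IsClosed 𝒳) (h𝒳cv : Convex ℝ 𝒳)
    (U : Set X) (hU : IsOpen U) (hXU : 𝒳 ⊆ U)
    (ω : X → ℝ) (Dω : X → X →L[ℝ] ℝ) (D2ω : X → X →L[ℝ] X →L[ℝ] ℝ)
    (hωd : ∀ z ∈ U, HasFDerivAt ω (Dω z) z)
    (hωd2 : ∀ z ∈ U, HasFDerivAt Dω (D2ω z) z)
    (hωsc : StrongConvexOn 𝒳 1 ω)
    (β : ℝ) (hβ1 : 1 ≤ β)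
    (hωLip : ∀ z ∈ 𝒳, ∀ z' ∈ 𝒳, ‖Dω z - Dω z'‖ ≤ β * ‖z - z'‖)
    (hD2ω : ∀ z ∈ 𝒳, ‖D2ω z‖ ≤ β)
    (q : X → ℝ) (hq : ContinuousOn q 𝒳)
    (D : X → X → ℝ) (hD : ∀ x' x, D x' x = ω x' - ω x - Dω x (x' - x))
    (ε lam : ℝ) (hε : 0 < ε) (hlam : 0 < lam)
    (x xhat : X) (hx : x ∈ 𝒳) (hxhat : xhat ∈ 𝒳)
    (hmin : ∀ x' ∈ 𝒳, q xhat + lam⁻¹ * D xhat x ≤ q x' + lam⁻¹ * D x' x)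
    (huniq : ∀ x' ∈ 𝒳, q x' + lam⁻¹ * D x' x = q xhat + lam⁻¹ * D xhat x → x' = xhat)
    (hnear : ‖x - xhat‖ ≤ ε * lam / β) :
    (∀ ε' > (0 : ℝ), ∀ᶠ h in 𝓝[≠] (0 : X), xhat + h ∈ 𝒳 →
      -(ε' * ‖h‖) ≤ q (xhat + h) - q xhat - (lam⁻¹ • (Dω x - Dω xhat)) h) ∧
    ‖lam⁻¹ • (Dω x - Dω xhat)‖ ≤ ε ∧
    lam⁻¹ * ‖(D2ω x) (x - xhat)‖ ≤ ε := by

  have hβ0 : (0:ℝ) < β := lt_of_lt_of_le one_pos hβ1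
  have hlaminv : (0:ℝ) < lam⁻¹ := inv_pos.mpr hlam
  have hbound : β * ‖x - xhat‖ ≤ ε * lam := by
    have := mul_le_mul_of_nonneg_left hnear hβ0.le
    calc β * ‖x - xhat‖ ≤ β * (ε * lam / β) := this
    _ = ε * lam := by field_simp
  refine ⟨?_, ?_, ?_⟩
  · intro ε' hε'
    have hfd : HasFDerivAt ω (Dω xhat) xhat := hωd xhat (hXU hxhat)
    rw [hasFDerivAt_iff_isLittleO_nhds_zero] at hfd
    have hE := hfd.def (by positivity : (0:ℝ) < ε' * lam)
    filter_upwards [hE.filter_mono nhdsWithin_le_nhds] with h hEh hmem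
    have hm := hmin (xhat + h) hmem
    rw [hD, hD] at hm
    have hlin : Dω x (xhat + h - x) = Dω x (xhat - x) + Dω x h := by
      rw [show xhat + h - x = (xhat - x) + h by abel, map_add]
    rw [hlin] at hm
    have hξ : (lam⁻¹ • (Dω x - Dω xhat)) h = lam⁻¹ * (Dω x h - Dω xhat h) := by
      simp [ContinuousLinearMap.smul_apply, ContinuousLinearMap.sub_apply]
    rw [hξ]
    have hEh' : |ω (xhat + h) - ω xhat - Dω xhat h| ≤ ε' * lam * ‖h‖ := by
      simpa [Real.norm_eq_abs] using hEh
    have h1 : ω (xhat + h) - ω xhat - Dω xhat h ≤ ε' * lam * ‖h‖ :=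
      le_trans (le_abs_self _) hEh'
    have h2 := mul_le_mul_of_nonneg_left h1 hlaminv.le
    have heq : lam⁻¹ * (ε' * lam * ‖h‖) = ε' * ‖h‖ := by field_simp
    linarith [hm, h2]
  · have hL := hωLip x hx xhat hxhat
    have hns : ‖lam⁻¹ • (Dω x - Dω xhat)‖ = lam⁻¹ * ‖Dω x - Dω xhat‖ := by
      rw [norm_smul lam⁻¹ (Dω x - Dω xhat), Real.norm_eq_abs, abs_of_pos hlaminv]
    rw [hns]
    calc lam⁻¹ * ‖Dω x - Dω xhat‖ ≤ lam⁻¹ * (β * ‖x - xhat‖) :=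
          mul_le_mul_of_nonneg_left hL hlaminv.le
    _ ≤ lam⁻¹ * (ε * lam) := mul_le_mul_of_nonneg_left hbound hlaminv.le
    _ = ε := by field_simp
  · have hle : ‖(D2ω x) (x - xhat)‖ ≤ β * ‖x - xhat‖ :=
      le_trans ((D2ω x).le_opNorm _) (mul_le_mul_of_nonneg_right (hD2ω x hx) (norm_nonneg _))
    calc lam⁻¹ * ‖(D2ω x) (x - xhat)‖ ≤ lam⁻¹ * (ε * lam) :=
          mul_le_mul_of_nonneg_left (le_trans hle hbound) hlaminv.le
    _ = ε := by field_simp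
end

section
/- Let λ, η > 0, suppose |q(x') − q_ρ(x')| ≤ η/4 for all x' ∈ 𝒳, and fix x_K, x_{K+1} ∈ 𝒳. Let Q(x') = q(x') + λ⁻¹D_{ω_𝒳}(x', x_K) and Q_ρ(x') = q_ρ(x') + λ⁻¹D_{ω_𝒳}(x', x_K); assume Q is (2λ)⁻¹-strongly convex on 𝒳 with minimizer p = prox(q, x_K, λ) over 𝒳. If Q_ρ(x_{K+1}) ≤ inf_{x'∈𝒳} Q_ρ(x') + η and ‖x_{K+1} − x_K‖ ≤ 4√(λη), then ‖x_K − p‖ ≤ 8√(ηλ). -/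
open Filter Topology Set

/-- Primal-then-dual smoothing: if `|q - q_ρ| ≤ η/4` on `𝒳`, `Q` is `(2λ)⁻¹`-strongly convex
on `𝒳` with minimizer `p = prox(q, x_K, λ)`, `Q_ρ(x_{K+1}) ≤ inf_{𝒳} Q_ρ + η` and
`‖x_{K+1} - x_K‖ ≤ 4√(λη)`, then `‖x_K - p‖ ≤ 8√(ηλ)`. -/
theorem near_stationarity_primal_then_dual
    {X : Type*} [NormedAddCommGroup X] [NormedSpace ℝ X] [FiniteDimensional ℝ X]
    (𝒳 : Set X) (h𝒳ne : 𝒳.Nonempty) (h𝒳cl : IsClosed 𝒳) (h𝒳cv : Convex ℝ 𝒳)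
    (U : Set X) (hU : IsOpen U) (hXU : 𝒳 ⊆ U)
    (ω : X → ℝ) (Dω : X → X →L[ℝ] ℝ)
    (hωd : ∀ z ∈ U, HasFDerivAt ω (Dω z) z)
    (hωsc : StrongConvexOn 𝒳 1 ω)
    (D : X → X → ℝ) (hD : ∀ x' x, D x' x = ω x' - ω x - Dω x (x' - x))
    (q qρ : X → ℝ)
    (lam η : ℝ) (hlam : 0 < lam) (hη : 0 < η)
    (hclose : ∀ x' ∈ 𝒳, |q x' - qρ x'| ≤ η / 4)
    (xK xK1 : X) (hxK : xK ∈ 𝒳) (hxK1 : xK1 ∈ 𝒳)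
    (Q Qρ : X → ℝ)
    (hQ : ∀ x', Q x' = q x' + lam⁻¹ * D x' xK)
    (hQρ : ∀ x', Qρ x' = qρ x' + lam⁻¹ * D x' xK)
    (hQsc : StrongConvexOn 𝒳 (2 * lam)⁻¹ Q)
    (p : X) (hp : p ∈ 𝒳) (hpmin : ∀ x' ∈ 𝒳, Q p ≤ Q x')
    (hsubopt : ∀ x' ∈ 𝒳, Qρ xK1 ≤ Qρ x' + η)
    (hstep : ‖xK1 - xK‖ ≤ 4 * Real.sqrt (lam * η)) :
    ‖xK - p‖ ≤ 8 * Real.sqrt (η * lam) := by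
  -- suboptimality transfer: Q xK1 - Q p ≤ 3/2 * η
  have h1 := (abs_le.1 (hclose xK1 hxK1)).2
  have h2 := (abs_le.1 (hclose p hp)).1
  have h3 := hsubopt p hp
  have hkey : Q xK1 - Q p ≤ 3 / 2 * η := by
    rw [hQ xK1, hQ p]
    rw [hQρ xK1, hQρ p] at h3
    linarith
  -- strong convexity at the midpoint
  have hmid := hQsc.2 hxK1 hp (by norm_num : (0:ℝ) ≤ 1/2) (by norm_num : (0:ℝ) ≤ 1/2)
    (by norm_num : (1:ℝ)/2 + 1/2 = 1)
  have hmem : (1/2 : ℝ) • xK1 + (1/2 : ℝ) • p ∈ 𝒳 :=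
    h𝒳cv hxK1 hp (by norm_num) (by norm_num) (by norm_num)
  have hpm := hpmin _ hmem
  simp only [smul_eq_mul] at hmid
  have h2l : (0:ℝ) < 2 * lam := by linarith
  have hinv : (0:ℝ) < (2 * lam)⁻¹ := inv_pos.2 h2l
  have hsq : ‖xK1 - p‖ ^ 2 ≤ 12 * (lam * η) := by
    have h6 : (2 * lam)⁻¹ / 2 * ‖xK1 - p‖ ^ 2 ≤ 2 * (3 / 2 * η) := by
      nlinarith [hpm, hmid, hkey]
    have h7 : ‖xK1 - p‖ ^ 2 ≤ 3 * η * (2 * (2 * lam)) := by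
      have h8 : (2 * lam)⁻¹ * ‖xK1 - p‖ ^ 2 ≤ 2 * (3 / 2 * η) * 2 := by linarith
      calc ‖xK1 - p‖ ^ 2 = (2 * lam) * ((2 * lam)⁻¹ * ‖xK1 - p‖ ^ 2) := by
            field_simp
        _ ≤ (2 * lam) * (2 * (3 / 2 * η) * 2) :=
            mul_le_mul_of_nonneg_left h8 h2l.le
        _ = 3 * η * (2 * (2 * lam)) := by ring
    nlinarith
  have hnn : (0:ℝ) ≤ lam * η := le_of_lt (mul_pos hlam hη)
  have h5 : ‖xK1 - p‖ ≤ 4 * Real.sqrt (lam * η) := by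
    have hb : ‖xK1 - p‖ ^ 2 ≤ (4 * Real.sqrt (lam * η)) ^ 2 := by
      rw [mul_pow, Real.sq_sqrt hnn]; nlinarith
    have := Real.sqrt_le_sqrt hb
    rwa [Real.sqrt_sq (norm_nonneg _), Real.sqrt_sq (by positivity)] at this
  have hcomm : Real.sqrt (η * lam) = Real.sqrt (lam * η) := by rw [mul_comm]
  calc ‖xK - p‖ = ‖(xK - xK1) + (xK1 - p)‖ := by abel_nf
    _ ≤ ‖xK - xK1‖ + ‖xK1 - p‖ := norm_add_le _ _
    _ = ‖xK1 - xK‖ + ‖xK1 - p‖ := by rw [norm_sub_rev]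
    _ ≤ 4 * Real.sqrt (lam * η) + 4 * Real.sqrt (lam * η) := add_le_add hstep h5
    _ = 8 * Real.sqrt (η * lam) := by rw [hcomm]; ring
end

section
/- Let ε, λ > 0 and β_𝒳 ≥ 1, and set η = ε²λ/(64β_𝒳²). Suppose |q(x') − q_ρ(x')| ≤ η/4 for all x' ∈ 𝒳, and fix x_K, x_{K+1} ∈ 𝒳. Let Q(x') = q(x') + λ⁻¹D_{ω_𝒳}(x', x_K) and Q_ρ(x') = q_ρ(x') + λ⁻¹D_{ω_𝒳}(x', x_K); assume Q is (2λ)⁻¹-strongly convex on 𝒳 with minimizer p = prox(q, x_K, λ) over 𝒳. If Q_ρ(x_{K+1}) ≤ inf_{x'∈𝒳} Q_ρ(x') + η and ‖x_{K+1} − x_K‖ ≤ 4√(λη), then ‖x_K − prox(q, x_K, λ)‖ ≤ ελ/β_𝒳. -/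
open Filter Topology Set

/-- With `η = ε²λ/(64β_𝒳²)`, if `|q - q_ρ| ≤ η/4` on `𝒳`, `Q` is `(2λ)⁻¹`-strongly convex on
`𝒳` with minimizer `p = prox(q, x_K, λ)`, `Q_ρ(x_{K+1}) ≤ inf_{𝒳} Q_ρ + η` and
`‖x_{K+1} - x_K‖ ≤ 4√(λη)`, then `‖x_K - prox(q, x_K, λ)‖ ≤ ελ/β_𝒳`. -/
theorem eps_near_stationary_point
    {X : Type*} [NormedAddCommGroup X] [NormedSpace ℝ X] [FiniteDimensional ℝ X]
    (𝒳 : Set X) (h𝒳ne : 𝒳.Nonempty) (h𝒳cl : IsClosed 𝒳) (h𝒳cv : Convex ℝ 𝒳)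
    (U : Set X) (hU : IsOpen U) (hXU : 𝒳 ⊆ U)
    (ω : X → ℝ) (Dω : X → X →L[ℝ] ℝ)
    (hωd : ∀ z ∈ U, HasFDerivAt ω (Dω z) z)
    (hωsc : StrongConvexOn 𝒳 1 ω)
    (D : X → X → ℝ) (hD : ∀ x' x, D x' x = ω x' - ω x - Dω x (x' - x))
    (q qρ : X → ℝ)
    (ε lam β η : ℝ) (hε : 0 < ε) (hlam : 0 < lam) (hβ : 1 ≤ β)
    (hηdef : η = ε ^ 2 * lam / (64 * β ^ 2))
    (hclose : ∀ x' ∈ 𝒳, |q x' - qρ x'| ≤ η / 4)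
    (xK xK1 : X) (hxK : xK ∈ 𝒳) (hxK1 : xK1 ∈ 𝒳)
    (Q Qρ : X → ℝ)
    (hQ : ∀ x', Q x' = q x' + lam⁻¹ * D x' xK)
    (hQρ : ∀ x', Qρ x' = qρ x' + lam⁻¹ * D x' xK)
    (hQsc : StrongConvexOn 𝒳 (2 * lam)⁻¹ Q)
    (p : X) (hp : p ∈ 𝒳) (hpmin : ∀ x' ∈ 𝒳, Q p ≤ Q x')
    (hsubopt : ∀ x' ∈ 𝒳, Qρ xK1 ≤ Qρ x' + η)
    (hstep : ‖xK1 - xK‖ ≤ 4 * Real.sqrt (lam * η)) :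
    ‖xK - p‖ ≤ ε * lam / β := by
  have hβ0 : (0:ℝ) < β := lt_of_lt_of_le one_pos hβ
  have hη : 0 < η := by
    rw [hηdef]; positivity
  -- Q and Qρ are η/4-close on 𝒳
  have hQQρ : ∀ x ∈ 𝒳, |Q x - Qρ x| ≤ η / 4 := by
    intro x hx
    rw [hQ, hQρ]
    have := hclose x hx
    have h : q x + lam⁻¹ * D x xK - (qρ x + lam⁻¹ * D x xK) = q x - qρ x := by ring
    rw [h]; exact this
  -- suboptimality transfers to Q
  have hkey : Q xK1 ≤ Q p + 3 * η / 2 := by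
    have h1 := abs_le.1 (hQQρ xK1 hxK1)
    have h2 := abs_le.1 (hQQρ p hp)
    have h3 := hsubopt p hp
    linarith [h1.2, h2.1, h3]
  -- strong convexity at the minimizer with t = 1/2
  have hmid : (1/2 : ℝ) • xK1 + (1/2 : ℝ) • p ∈ 𝒳 :=
    h𝒳cv hxK1 hp (by norm_num) (by norm_num) (by norm_num)
  have hsc := hQsc.2 hxK1 hp (by norm_num : (0:ℝ) ≤ 1/2) (by norm_num : (0:ℝ) ≤ 1/2)
    (by norm_num : (1/2 : ℝ) + 1/2 = 1)
  have hpm := hpmin _ hmid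
  have hm : (0:ℝ) < (2 * lam)⁻¹ := by positivity
  -- derive the quadratic bound
  have hsq : ‖xK1 - p‖ ^ 2 ≤ 12 * (lam * η) := by
    simp only [smul_eq_mul] at hsc
    have h4 : (1/2 : ℝ) * (1/2) * ((2 * lam)⁻¹ / 2 * ‖xK1 - p‖ ^ 2)
        ≤ (Q xK1 - Q p) / 2 := by linarith
    have h7 : (2 * lam)⁻¹ * ‖xK1 - p‖ ^ 2 ≤ 6 * η := by nlinarith [h4, hkey]
    have h8 : ‖xK1 - p‖ ^ 2 = (2 * lam) * ((2 * lam)⁻¹ * ‖xK1 - p‖ ^ 2) := by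
      field_simp
    rw [h8]; nlinarith [h7, hlam]
  have hn1 : ‖xK1 - p‖ ≤ 4 * Real.sqrt (lam * η) := by
    have h16 : ‖xK1 - p‖ ^ 2 ≤ 16 * (lam * η) := by nlinarith [hlam.le, hη.le]
    have := Real.sqrt_le_sqrt h16
    rw [Real.sqrt_sq (norm_nonneg _)] at this
    calc ‖xK1 - p‖ ≤ Real.sqrt (16 * (lam * η)) := this
      _ = 4 * Real.sqrt (lam * η) := by
          rw [show (16:ℝ) * (lam * η) = 4 ^ 2 * (lam * η) by norm_num,
            Real.sqrt_mul (by positivity), Real.sqrt_sq (by norm_num : (0:ℝ) ≤ 4)]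
  have htri : ‖xK - p‖ ≤ 8 * Real.sqrt (lam * η) := by
    calc ‖xK - p‖ ≤ ‖xK - xK1‖ + ‖xK1 - p‖ := norm_sub_le_norm_sub_add_norm_sub _ _ _
      _ ≤ 4 * Real.sqrt (lam * η) + 4 * Real.sqrt (lam * η) := by
          rw [norm_sub_rev]; exact add_le_add hstep hn1
      _ = 8 * Real.sqrt (lam * η) := by ring
  have hsqrt : Real.sqrt (lam * η) = ε * lam / (8 * β) := by
    have : lam * η = (ε * lam / (8 * β)) ^ 2 := by
      rw [hηdef]; field_simp; ring
    rw [this, Real.sqrt_sq (by positivity)]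
  rw [hsqrt] at htri
  calc ‖xK - p‖ ≤ 8 * (ε * lam / (8 * β)) := htri
    _ = ε * lam / β := by field_simp
end

section
/- Let (v_k)_{k≥1}, (a_k)_{k≥1}, (b_k)_{k≥1} be nonnegative real sequences with (a_k) non-decreasing. If for every k ≥ 1 one has v_k² ≤ a_k + Σ_{t=1}^k b_t v_t, then for every k ≥ 1 and every 1 ≤ t ≤ k, v_t ≤ √(a_k) + Σ_{i=1}^k b_i. -/
open Finset

/-! At an index `t₀ ≤ k` where `v` is maximal on `[1, k]`, the hypothesis bounds the sum by
`(∑ b) · v t₀`, so `x = v t₀` satisfies `x² ≤ a_k + B x` with `B = ∑_{i ≤ k} b_i`;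
this quadratic inequality forces `x ≤ √a_k + B`. -/

theorem le_sqrt_add_of_sq_le_add_mul {x a B : ℝ} (hB : 0 ≤ B) (h : x ^ 2 ≤ a + B * x) :
    x ≤ √a + B := by
  by_contra! hlt
  have hsq : a < (x - B) ^ 2 := Real.lt_sq_of_sqrt_lt (by linarith)
  nlinarith [Real.sqrt_nonneg a]

theorem Finset.sum_mul_le_sum_mul_of_subset {ι : Type*} {s t : Finset ι} {b v : ι → ℝ} {M : ℝ}
    (hst : s ⊆ t) (hb : ∀ i ∈ t, 0 ≤ b i) (hM : 0 ≤ M) (hv : ∀ i ∈ s, v i ≤ M) :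
    ∑ i ∈ s, b i * v i ≤ (∑ i ∈ t, b i) * M :=
  calc ∑ i ∈ s, b i * v i ≤ ∑ i ∈ s, b i * M :=
        sum_le_sum fun i hi => mul_le_mul_of_nonneg_left (hv i hi) (hb i (hst hi))
    _ ≤ ∑ i ∈ t, b i * M := sum_le_sum_of_subset_of_nonneg hst fun i hi _ => mul_nonneg (hb i hi) hM
    _ = (∑ i ∈ t, b i) * M := (sum_mul t b M).symm

theorem sequence_square_bound_general
    (v a b : ℕ → ℝ)
    (hb : ∀ k, 0 ≤ b k)
    (hamono : ∀ k l, k ≤ l → a k ≤ a l)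
    (hrec : ∀ k, 1 ≤ k → v k ^ 2 ≤ a k + ∑ t ∈ Finset.Icc 1 k, b t * v t) :
    ∀ k, 1 ≤ k → ∀ t, 1 ≤ t → t ≤ k →
      v t ≤ Real.sqrt (a k) + ∑ i ∈ Finset.Icc 1 k, b i := by
  intro k hk t ht htk
  obtain ⟨t₀, ht₀, hmax⟩ := exists_max_image (Icc 1 k) v ⟨1, mem_Icc.2 ⟨le_rfl, hk⟩⟩
  have hB : 0 ≤ ∑ i ∈ Icc 1 k, b i := sum_nonneg fun i _ => hb i
  refine (hmax t (mem_Icc.2 ⟨ht, htk⟩)).trans ?_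
  rcases lt_or_ge (v t₀) 0 with hneg | hnonneg
  · linarith [Real.sqrt_nonneg (a k)]
  obtain ⟨h1, h2⟩ := mem_Icc.1 ht₀
  have hsub : Icc 1 t₀ ⊆ Icc 1 k := Icc_subset_Icc_right h2
  refine le_sqrt_add_of_sq_le_add_mul hB ?_
  calc v t₀ ^ 2 ≤ a t₀ + ∑ s ∈ Icc 1 t₀, b s * v s := hrec t₀ h1
    _ ≤ a k + (∑ i ∈ Icc 1 k, b i) * v t₀ :=
        add_le_add (hamono t₀ k h2) (sum_mul_le_sum_mul_of_subset hsub (fun i _ => hb i) hnonneg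
          fun s hs => hmax s (hsub hs))

/-- If `(v_k)`, `(a_k)`, `(b_k)` are nonnegative sequences with `(a_k)` non-decreasing and
`v_k² ≤ a_k + ∑_{t=1}^k b_t v_t` for all `k ≥ 1`, then `v_t ≤ √(a_k) + ∑_{i=1}^k b_i` for all
`1 ≤ t ≤ k`. -/
theorem sequence_square_bound
    (v a b : ℕ → ℝ)
    (hv : ∀ k, 0 ≤ v k) (ha : ∀ k, 0 ≤ a k) (hb : ∀ k, 0 ≤ b k)
    (hamono : ∀ k l, k ≤ l → a k ≤ a l)
    (hrec : ∀ k, 1 ≤ k → v k ^ 2 ≤ a k + ∑ t ∈ Finset.Icc 1 k, b t * v t) :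
    ∀ k, 1 ≤ k → ∀ t, 1 ≤ t → t ≤ k →
      v t ≤ Real.sqrt (a k) + ∑ i ∈ Finset.Icc 1 k, b i :=
  sequence_square_bound_general v a b hb hamono hrec
end

section
/- The dual function π(y) = min_{x∈𝒳} [Ψ(x,y) + r(x) + μω_𝒳(x)] is Fréchet differentiable on 𝒴 with ∇π(y) = ∇_yΨ(x*(y), y), and ∇π is L_π-Lipschitz on 𝒴 where L_π = L_yy + L_xy²/μ: ‖∇π(y) − ∇π(y')‖ ≤ (L_yy + L_xy²/μ)‖y − y'‖ for all y, y' ∈ 𝒴. -/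
/-!
Since each `Ψ x` is concave, `π y' - π y ≤ Ψ (x* y) y' - Ψ (x* y) y ≤ Ψy (x* y) y (y' - y)`: the
field `G y = Ψy (x* y) y` is a supergradient of `π` on `𝒴`. The primal objectives at `y` and `y'`
are `μ`-strongly convex and differ by `Ψ · y - Ψ · y'`, whose derivative is bounded by
`L_xy ‖y - y'‖`; adding their quadratic growth at the two minimizers gives
`μ ‖x* y - x* y'‖ ≤ L_xy ‖y - y'‖`, hence `G` is `(L_yy + L_xy² / μ)`-Lipschitz. A supergradient
field continuous at `y` is the derivative there: the supergradient inequalities at `y` and `y'`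
trap the first-order error between `(G y' - G y) (y' - y)` and `0`.
-/

open Filter Topology Set

section Convexity

variable {E : Type*} [NormedAddCommGroup E] [NormedSpace ℝ E] {s : Set E} {f g : E → ℝ}
  {m : ℝ} {x y : E}

theorem ConcaveOn.sub_le_of_hasFDerivAt (hf : ConcaveOn ℝ s f) (hx : x ∈ s) (hy : y ∈ s)
    {f' : E →L[ℝ] ℝ} (hf' : HasFDerivAt f f' x) : f y - f x ≤ f' (y - x) := by
  have hline : ConcaveOn ℝ (AffineMap.lineMap (k := ℝ) x y ⁻¹' s)
      (f ∘ AffineMap.lineMap (k := ℝ) x y) :=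
    hf.comp_affineMap _
  have hderiv : HasDerivAt (f ∘ AffineMap.lineMap (k := ℝ) x y) (f' (y - x)) 0 := by
    have hf₀ : HasFDerivAt f f' (AffineMap.lineMap x y (0 : ℝ)) := by simpa using hf'
    exact hf₀.comp_hasDerivAt 0 AffineMap.hasDerivAt_lineMap
  simpa [slope_def_field] using
    hline.slope_le_of_hasDerivAt (x := 0) (y := 1) (by simpa using hx) (by simpa using hy)
      zero_lt_one hderiv

theorem StrongConvexOn.const_mul {c : ℝ} (hc : 0 ≤ c) (hf : StrongConvexOn s m f) :
    StrongConvexOn s (c * m) (fun x => c * f x) := by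
  refine ⟨hf.1, fun x hx y hy a b ha hb hab => ?_⟩
  have := mul_le_mul_of_nonneg_left (hf.2 hx hy ha hb hab) hc
  simp only [smul_eq_mul] at this ⊢
  linarith

theorem ConvexOn.add_strongConvexOn (hf : ConvexOn ℝ s f) (hg : StrongConvexOn s m g) :
    StrongConvexOn s m (f + g) := by
  simpa [StrongConvexOn] using (uniformConvexOn_zero.mpr hf).add hg

theorem StrongConvexOn.add_sq_le_of_isMinOn (hf : StrongConvexOn s m f) (hx : x ∈ s)
    (hmin : IsMinOn f s x) (hy : y ∈ s) : f x + m / 2 * ‖y - x‖ ^ 2 ≤ f y := by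
  set c := m / 2 * ‖y - x‖ ^ 2 with hc
  -- Minimality against `t • y + (1 - t) • x` gives the bound up to a factor `1 - t`; let `t → 0⁺`.
  have hsegment : ∀ t ∈ Ioc (0 : ℝ) 1, f x + (1 - t) * c ≤ f y := by
    rintro t ⟨ht0, ht1⟩
    have hconv := hf.2 hy hx ht0.le (sub_nonneg.mpr ht1) (by ring)
    have hle := isMinOn_iff.mp hmin _ (hf.1 hy hx ht0.le (sub_nonneg.mpr ht1) (by ring))
    simp only [smul_eq_mul, ← hc] at hconv
    have : t * (f x + (1 - t) * c) ≤ t * f y := by linarith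
    exact le_of_mul_le_mul_left this ht0
  have hlim : Tendsto (fun t : ℝ => f x + (1 - t) * c) (𝓝[>] 0) (𝓝 (f x + c)) := by
    have : Continuous fun t : ℝ => f x + (1 - t) * c := by fun_prop
    simpa using (this.tendsto 0).mono_left nhdsWithin_le_nhds
  exact le_of_tendsto hlim <| by
    filter_upwards [Ioc_mem_nhdsGT (zero_lt_one' ℝ)] with t ht using hsegment t ht

theorem StrongConvexOn.mul_norm_sub_le_of_isMinOn {K : ℝ} {D : E → E →L[ℝ] ℝ}
    (hf : StrongConvexOn s m f) (hg : StrongConvexOn s m g) (hx : x ∈ s) (hy : y ∈ s)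
    (hfx : IsMinOn f s x) (hgy : IsMinOn g s y)
    (hD : ∀ z ∈ s, HasFDerivWithinAt (f - g) (D z) s z) (hDK : ∀ z ∈ s, ‖D z‖ ≤ K) :
    m * ‖x - y‖ ≤ K := by
  have hf_growth := hf.add_sq_le_of_isMinOn hx hfx hy
  have hg_growth := hg.add_sq_le_of_isMinOn hy hgy hx
  have hmvt := hf.1.norm_image_sub_le_of_norm_hasFDerivWithin_le hD hDK hx hy
  have hK : 0 ≤ K := (norm_nonneg _).trans (hDK x hx)
  rw [norm_sub_rev y, Real.norm_eq_abs, Pi.sub_apply, Pi.sub_apply] at hmvt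
  rw [norm_sub_rev] at hf_growth
  have hgap := le_abs_self ((f y - g y) - (f x - g x))
  rcases (norm_nonneg (x - y)).eq_or_lt with h | h
  · rw [← h, mul_zero]; exact hK
  · nlinarith

theorem hasFDerivWithinAt_of_supergradient {G : E → E →L[ℝ] ℝ} (hy : y ∈ s)
    (hsup : ∀ z ∈ s, ∀ z' ∈ s, f z' - f z ≤ G z (z' - z)) (hG : ContinuousWithinAt G s y) :
    HasFDerivWithinAt f (G y) s y := by
  refine .of_isLittleO <| Asymptotics.isLittleO_iff.mpr fun c hc => ?_
  filter_upwards [self_mem_nhdsWithin, hG.eventually (Metric.closedBall_mem_nhds (G y) hc)]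
    with y' hy' hGy'
  have hupper := hsup y hy y' hy'
  have hlower := hsup y' hy' y hy
  have hgap : |(G y' - G y) (y' - y)| ≤ c * ‖y' - y‖ :=
    ((G y' - G y).le_opNorm _).trans
      (mul_le_mul_of_nonneg_right (by rwa [← dist_eq_norm]) (norm_nonneg _))
  rw [← neg_sub y' y, map_neg] at hlower
  rw [sub_apply, abs_le] at hgap
  rw [Real.norm_eq_abs, abs_le]
  constructor <;> linarith

end Convexity

theorem norm_sub_le_of_partial_lipschitz {α β F : Type*} [SeminormedAddCommGroup α]
    [SeminormedAddCommGroup β] [SeminormedAddCommGroup F] (A : α → β → F) {a a' : α} {b b' : β}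
    {L₁ L₂ m : ℝ} (hm : 0 < m) (hA₁ : ‖A a b - A a' b‖ ≤ L₁ * ‖a - a'‖)
    (hA₂ : ‖A a' b - A a' b'‖ ≤ L₂ * ‖b - b'‖) (ha : m * ‖a - a'‖ ≤ L₁ * ‖b - b'‖) :
    ‖A a b - A a' b'‖ ≤ (L₂ + L₁ ^ 2 / m) * ‖b - b'‖ := by
  have hcoupling : L₁ * ‖a - a'‖ ≤ L₁ ^ 2 / m * ‖b - b'‖ := by
    rw [div_mul_eq_mul_div, le_div_iff₀ hm]
    rcases le_or_gt 0 L₁ with h | h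
    · nlinarith
    · nlinarith [mul_nonneg (norm_nonneg (a - a')) hm.le,
        mul_nonneg (sq_nonneg L₁) (norm_nonneg (b - b'))]
  calc ‖A a b - A a' b'‖ ≤ ‖A a b - A a' b‖ + ‖A a' b - A a' b'‖ :=
        norm_sub_le_norm_sub_add_norm_sub _ _ _
    _ ≤ (L₂ + L₁ ^ 2 / m) * ‖b - b'‖ := by linarith

theorem dual_function_smooth_general
    {X Y : Type*} [NormedAddCommGroup X] [NormedSpace ℝ X]
    [NormedAddCommGroup Y] [NormedSpace ℝ Y]
    (𝒳 : Set X)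
    (𝒴 : Set Y)
    (r : X → ℝ) (hrcv : ConvexOn ℝ 𝒳 r)
    (ω : X → ℝ) (hωsc : StrongConvexOn 𝒳 1 ω)
    (μ : ℝ) (hμ : 0 < μ)
    (Ψ : X → Y → ℝ)
    (hΨcv : ∀ y ∈ 𝒴, ConvexOn ℝ 𝒳 (fun x => Ψ x y))
    (hΨconc : ∀ x ∈ 𝒳, ConcaveOn ℝ 𝒴 (Ψ x))
    (V : Set X) (hXV : 𝒳 ⊆ V)
    (Ψx : X → Y → X →L[ℝ] ℝ)
    (hΨx : ∀ y ∈ 𝒴, ∀ x ∈ V, HasFDerivAt (fun x' => Ψ x' y) (Ψx x y) x)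
    (W : Set Y) (hYW : 𝒴 ⊆ W)
    (Ψy : X → Y → Y →L[ℝ] ℝ)
    (hΨy : ∀ x ∈ 𝒳, ∀ y ∈ W, HasFDerivAt (fun y' => Ψ x y') (Ψy x y) y)
    (Lxy Lyy : ℝ)
    (hLxy : ∀ x ∈ 𝒳, ∀ y ∈ 𝒴, ∀ y' ∈ 𝒴, ‖Ψx x y - Ψx x y'‖ ≤ Lxy * ‖y - y'‖)
    (hLyx : ∀ x ∈ 𝒳, ∀ x' ∈ 𝒳, ∀ y ∈ 𝒴, ‖Ψy x y - Ψy x' y‖ ≤ Lxy * ‖x - x'‖)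
    (hLyy : ∀ x ∈ 𝒳, ∀ y ∈ 𝒴, ∀ y' ∈ 𝒴, ‖Ψy x y - Ψy x y'‖ ≤ Lyy * ‖y - y'‖)
    (xstar : Y → X)
    (hxstarmem : ∀ y ∈ 𝒴, xstar y ∈ 𝒳)
    (hxstarmin : ∀ y ∈ 𝒴, ∀ x ∈ 𝒳,
      Ψ (xstar y) y + r (xstar y) + μ * ω (xstar y) ≤ Ψ x y + r x + μ * ω x)
    (π : Y → ℝ)
    (hπ : ∀ y ∈ 𝒴, π y = Ψ (xstar y) y + r (xstar y) + μ * ω (xstar y)) :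
    (∀ y ∈ 𝒴, HasFDerivWithinAt π (Ψy (xstar y) y) 𝒴 y) ∧
    (∀ y ∈ 𝒴, ∀ y' ∈ 𝒴,
      ‖Ψy (xstar y) y - Ψy (xstar y') y'‖ ≤ (Lyy + Lxy ^ 2 / μ) * ‖y - y'‖) := by
  have hsc : ∀ y ∈ 𝒴, StrongConvexOn 𝒳 μ (fun x => Ψ x y + r x + μ * ω x) := fun y hy => by
    have h := ((hΨcv y hy).add hrcv).add_strongConvexOn (hωsc.const_mul hμ.le)
    rwa [mul_one] at h
  have hmin : ∀ y ∈ 𝒴, IsMinOn (fun x => Ψ x y + r x + μ * ω x) 𝒳 (xstar y) :=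
    fun y hy => isMinOn_iff.mpr (hxstarmin y hy)
  have hxstar_lip : ∀ y ∈ 𝒴, ∀ y' ∈ 𝒴, μ * ‖xstar y - xstar y'‖ ≤ Lxy * ‖y - y'‖ := by
    intro y hy y' hy'
    have hdiff : ((fun x => Ψ x y + r x + μ * ω x) - fun x => Ψ x y' + r x + μ * ω x) =
        fun x => Ψ x y - Ψ x y' := by
      funext x; simp only [Pi.sub_apply]; ring
    refine (hsc y hy).mul_norm_sub_le_of_isMinOn (hsc y' hy') (hxstarmem y hy) (hxstarmem y' hy')
      (hmin y hy) (hmin y' hy') (fun x hx => ?_) (fun x hx => hLxy x hx y hy y' hy')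
    rw [hdiff]
    exact ((hΨx y hy x (hXV hx)).sub (hΨx y' hy' x (hXV hx))).hasFDerivWithinAt
  have hgrad_lip : ∀ y ∈ 𝒴, ∀ y' ∈ 𝒴,
      ‖Ψy (xstar y) y - Ψy (xstar y') y'‖ ≤ (Lyy + Lxy ^ 2 / μ) * ‖y - y'‖ :=
    fun y hy y' hy' => norm_sub_le_of_partial_lipschitz Ψy hμ
      (hLyx _ (hxstarmem y hy) _ (hxstarmem y' hy') y hy) (hLyy _ (hxstarmem y' hy') y hy y' hy')
      (hxstar_lip y hy y' hy')
  have hsup : ∀ y ∈ 𝒴, ∀ y' ∈ 𝒴, π y' - π y ≤ Ψy (xstar y) y (y' - y) := by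
    intro y hy y' hy'
    have hconc := (hΨconc _ (hxstarmem y hy)).sub_le_of_hasFDerivAt hy hy'
      (hΨy _ (hxstarmem y hy) y (hYW hy))
    have := hxstarmin y' hy' _ (hxstarmem y hy)
    rw [hπ y hy, hπ y' hy']
    linarith
  have hcont : ContinuousOn (fun y => Ψy (xstar y) y) 𝒴 :=
    (LipschitzOnWith.of_dist_le' fun y hy y' hy' => by
      simpa only [dist_eq_norm] using hgrad_lip y hy y' hy').continuousOn
  exact ⟨fun y hy => hasFDerivWithinAt_of_supergradient (G := fun y => Ψy (xstar y) y) hy hsup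
    (hcont y hy), hgrad_lip⟩

/-- The dual function `π(y) = min_{x∈𝒳} [Ψ(x,y) + r(x) + μω_𝒳(x)]` is Fréchet differentiable
on `𝒴` with `∇π(y) = ∇_yΨ(x*(y), y)`, and `∇π` is `(L_yy + L_xy²/μ)`-Lipschitz on `𝒴`. -/
theorem dual_function_smooth
    {X Y : Type*} [NormedAddCommGroup X] [NormedSpace ℝ X] [FiniteDimensional ℝ X]
    [NormedAddCommGroup Y] [NormedSpace ℝ Y] [FiniteDimensional ℝ Y]
    (𝒳 : Set X) (h𝒳ne : 𝒳.Nonempty) (h𝒳cl : IsClosed 𝒳) (h𝒳cv : Convex ℝ 𝒳)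
    (𝒴 : Set Y) (h𝒴ne : 𝒴.Nonempty) (h𝒴cv : Convex ℝ 𝒴) (h𝒴cp : IsCompact 𝒴)
    (r : X → ℝ) (hrcv : ConvexOn ℝ 𝒳 r) (hrlsc : LowerSemicontinuousOn r 𝒳)
    (ω : X → ℝ) (hωc : ContinuousOn ω 𝒳) (hωsc : StrongConvexOn 𝒳 1 ω)
    (μ : ℝ) (hμ : 0 < μ)
    (Ψ : X → Y → ℝ)
    (hΨc : ContinuousOn (fun p : X × Y => Ψ p.1 p.2) (𝒳 ×ˢ 𝒴))
    (hΨcv : ∀ y ∈ 𝒴, ConvexOn ℝ 𝒳 (fun x => Ψ x y))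
    (hΨconc : ∀ x ∈ 𝒳, ConcaveOn ℝ 𝒴 (Ψ x))
    (V : Set X) (hV : IsOpen V) (hXV : 𝒳 ⊆ V)
    (Ψx : X → Y → X →L[ℝ] ℝ)
    (hΨx : ∀ y ∈ 𝒴, ∀ x ∈ V, HasFDerivAt (fun x' => Ψ x' y) (Ψx x y) x)
    (W : Set Y) (hW : IsOpen W) (hYW : 𝒴 ⊆ W)
    (Ψy : X → Y → Y →L[ℝ] ℝ)
    (hΨy : ∀ x ∈ 𝒳, ∀ y ∈ W, HasFDerivAt (fun y' => Ψ x y') (Ψy x y) y)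
    (Lxy Lyy : ℝ)
    (hLxy : ∀ x ∈ 𝒳, ∀ y ∈ 𝒴, ∀ y' ∈ 𝒴, ‖Ψx x y - Ψx x y'‖ ≤ Lxy * ‖y - y'‖)
    (hLyx : ∀ x ∈ 𝒳, ∀ x' ∈ 𝒳, ∀ y ∈ 𝒴, ‖Ψy x y - Ψy x' y‖ ≤ Lxy * ‖x - x'‖)
    (hLyy : ∀ x ∈ 𝒳, ∀ y ∈ 𝒴, ∀ y' ∈ 𝒴, ‖Ψy x y - Ψy x y'‖ ≤ Lyy * ‖y - y'‖)
    (xstar : Y → X)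
    (hxstarmem : ∀ y ∈ 𝒴, xstar y ∈ 𝒳)
    (hxstarmin : ∀ y ∈ 𝒴, ∀ x ∈ 𝒳,
      Ψ (xstar y) y + r (xstar y) + μ * ω (xstar y) ≤ Ψ x y + r x + μ * ω x)
    (hxstaruniq : ∀ y ∈ 𝒴, ∀ x ∈ 𝒳,
      Ψ x y + r x + μ * ω x = Ψ (xstar y) y + r (xstar y) + μ * ω (xstar y) → x = xstar y)
    (π : Y → ℝ)
    (hπ : ∀ y ∈ 𝒴, π y = Ψ (xstar y) y + r (xstar y) + μ * ω (xstar y)) :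
    (∀ y ∈ 𝒴, HasFDerivWithinAt π (Ψy (xstar y) y) 𝒴 y) ∧
    (∀ y ∈ 𝒴, ∀ y' ∈ 𝒴,
      ‖Ψy (xstar y) y - Ψy (xstar y') y'‖ ≤ (Lyy + Lxy ^ 2 / μ) * ‖y - y'‖) :=
  dual_function_smooth_general 𝒳 𝒴 r hrcv ω hωsc μ hμ Ψ hΨcv hΨconc V hXV Ψx hΨx W hYW Ψy hΨy Lxy
    Lyy hLxy hLyx hLyy xstar hxstarmem hxstarmin π hπ
end

section
/- (Inexact gradient mapping implies near-optimality) Let 0 < λ ≤ 1/L'_ρ, x̄ ∈ 𝒳, e ∈ 𝕏*, and let x⁺ = argmin_{x∈𝒳} [⟨∇f̄_ρ(x̄) + e, x⟩ + r(x) + μω_𝒳(x) + λ⁻¹D_{ω_𝒳}(x, x̄)]. Define G = (x̄ − x⁺)/λ and Ḡ = (∇ω_𝒳(x̄) − ∇ω_𝒳(x⁺))/λ. Then p_ρ(x⁺) − p_ρ(x*_ρ) ≤ 3(‖Ḡ‖² + ‖G‖² + ‖e‖²)/(2μ); in particular, if ‖Ḡ‖² + ‖G‖² + ‖e‖² ≤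 2με/3 then p_ρ(x⁺) − min_{x∈𝒳} p_ρ(x) ≤ ε. -/
/-!
Write `d = x* - x⁺`. The descent lemma at `x̄` and convexity of `f̄_ρ` give
`f̄_ρ(x⁺) - f̄_ρ(x*) ≤ L'_ρ/2 ‖x⁺ - x̄‖² - ∇f̄_ρ(x̄) d`; first-order optimality of `x⁺` for the convex
proximal objective gives `r(x⁺) - r(x*) ≤ (∇f̄_ρ(x̄) + e - Ḡ + μ ∇ω_𝒳(x⁺)) d`; strong convexity of
`ω_𝒳` bounds `μ ∇ω_𝒳(x⁺) d` by `μ (ω_𝒳(x*) - ω_𝒳(x⁺)) - μ/2 ‖d‖²`. Summing,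
`p_ρ(x⁺) - p_ρ(x*) ≤ L'_ρ λ²/2 ‖G‖² + (‖e‖ + ‖Ḡ‖) ‖d‖ - μ/2 ‖d‖²`; maximise over `‖d‖` and use
`L'_ρ λ² ≤ λ ≤ 1/μ`.
-/

open Filter Topology Set

section FirstOrder

variable {E : Type*} [NormedAddCommGroup E] [NormedSpace ℝ E] {f : E → ℝ} {f' : E →L[ℝ] ℝ}
  {s : Set E} {x y v : E}

theorem HasFDerivAt.hasDerivAt_add_smul {t : ℝ} (hf : HasFDerivAt f f' (x + t • v)) :
    HasDerivAt (fun t : ℝ ↦ f (x + t • v)) (f' v) t := by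
  have hline : HasDerivAt (fun t : ℝ ↦ x + t • v) v t := by
    simpa using ((hasDerivAt_id t).smul_const v).const_add x
  exact hf.comp_hasDerivAt t hline

theorem HasFDerivAt.le_of_eventually_sub_le_mul {g : ℝ → ℝ} {c : ℝ} (hf : HasFDerivAt f f' x)
    (hg : Tendsto g (𝓝[>] 0) (𝓝 c))
    (h : ∀ᶠ t in 𝓝[>] 0, f (x + t • v) - f x ≤ t * g t) : f' v ≤ c := by
  have hline : HasDerivAt (fun t : ℝ ↦ f (x + t • v)) (f' v) 0 :=
    HasFDerivAt.hasDerivAt_add_smul (by simpa using hf)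
  refine le_of_tendsto_of_tendsto (by simpa using hline.tendsto_slope_zero_right) hg ?_
  filter_upwards [h, self_mem_nhdsWithin] with t ht (htpos : 0 < t)
  rw [inv_mul_le_iff₀ htpos]
  simpa using ht

theorem UniformConvexOn.add_fderiv_add_le {φ : ℝ → ℝ} (hf : UniformConvexOn s φ f)
    (hfx : HasFDerivAt f f' x) (hx : x ∈ s) (hy : y ∈ s) :
    f x + f' (y - x) + φ ‖x - y‖ ≤ f y := by
  have hlim : Tendsto (fun t : ℝ ↦ f y - f x - (1 - t) * φ ‖x - y‖) (𝓝[>] 0)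
      (𝓝 (f y - f x - φ ‖x - y‖)) := by
    have : Continuous (fun t : ℝ ↦ f y - f x - (1 - t) * φ ‖x - y‖) := by fun_prop
    simpa using (this.tendsto 0).mono_left nhdsWithin_le_nhds
  have := hfx.le_of_eventually_sub_le_mul (v := y - x) hlim ?_
  · linarith
  filter_upwards [Ioo_mem_nhdsGT (zero_lt_one' ℝ)] with t ht
  have hconv := hf.2 hx hy (sub_nonneg.2 ht.2.le) ht.1.le (sub_add_cancel 1 t)
  rw [show (1 - t) • x + t • y = x + t • (y - x) by module] at hconv
  simp only [smul_eq_mul] at hconv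
  linarith

theorem ConvexOn.add_fderiv_le (hf : ConvexOn ℝ s f) (hfx : HasFDerivAt f f' x) (hx : x ∈ s)
    (hy : y ∈ s) : f x + f' (y - x) ≤ f y := by
  simpa using hf.uniformConvexOn_zero.add_fderiv_add_le hfx hx hy

theorem StrongConvexOn.add_fderiv_add_le {m : ℝ} (hf : StrongConvexOn s m f)
    (hfx : HasFDerivAt f f' x) (hx : x ∈ s) (hy : y ∈ s) :
    f x + f' (y - x) + m / 2 * ‖x - y‖ ^ 2 ≤ f y :=
  UniformConvexOn.add_fderiv_add_le hf hfx hx hy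

theorem IsMinOn.sub_le_fderiv_of_convexOn {h r : E → ℝ} (hmin : IsMinOn (fun z ↦ h z + r z) s x)
    (hr : ConvexOn ℝ s r) (hh : HasFDerivAt h f' x) (hx : x ∈ s) (hy : y ∈ s) :
    r x - r y ≤ f' (y - x) := by
  have := hh.neg.le_of_eventually_sub_le_mul (v := y - x) (g := fun _ ↦ r y - r x)
    tendsto_const_nhds ?_
  · simp only [neg_apply] at this
    linarith
  filter_upwards [Ioo_mem_nhdsGT (zero_lt_one' ℝ)] with t ht
  have hz := hr.1.add_smul_sub_mem hx hy (Ioo_subset_Icc_self ht)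
  have hconv := hr.2 hx hy (sub_nonneg.2 ht.2.le) ht.1.le (sub_add_cancel 1 t)
  rw [show (1 - t) • x + t • y = x + t • (y - x) by module] at hconv
  simp only [smul_eq_mul] at hconv
  have := isMinOn_iff.1 hmin _ hz
  simp only [Pi.neg_apply]
  linarith

theorem Convex.le_add_fderiv_add_of_norm_fderiv_sub_le {f' : E → E →L[ℝ] ℝ} {L : ℝ}
    (hs : Convex ℝ s) (hf : ∀ z ∈ s, HasFDerivAt f (f' z) z)
    (hL : ∀ z ∈ s, ‖f' z - f' x‖ ≤ L * ‖z - x‖) (hx : x ∈ s) (hy : y ∈ s) :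
    f y ≤ f x + f' x (y - x) + L / 2 * ‖y - x‖ ^ 2 := by
  set d := y - x
  have hseg : ∀ t ∈ Icc (0 : ℝ) 1, x + t • d ∈ s := fun t ht ↦ hs.add_smul_sub_mem hx hy ht
  have hderiv : ∀ t ∈ Icc (0 : ℝ) 1,
      HasDerivAt (fun t : ℝ ↦ f (x + t • d)) (f' (x + t • d) d) t :=
    fun t ht ↦ (hf _ (hseg t ht)).hasDerivAt_add_smul
  have hbound : ∀ t ∈ Icc (0 : ℝ) 1, f' (x + t • d) d ≤ f' x d + L * t * ‖d‖ ^ 2 := by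
    intro t ht
    have hlip := hL _ (hseg t ht)
    rw [add_sub_cancel_left, norm_smul, Real.norm_of_nonneg ht.1] at hlip
    have := le_of_abs_le ((f' (x + t • d) - f' x).le_opNorm d)
    rw [sub_apply] at this
    nlinarith [norm_nonneg d]
  have hB : ∀ t, HasDerivAt (fun t : ℝ ↦ f x + t * f' x d + L / 2 * t ^ 2 * ‖d‖ ^ 2)
      (f' x d + L * t * ‖d‖ ^ 2) t := fun t ↦
    ((((hasDerivAt_id t).mul_const (f' x d)).const_add (f x)).add
      (((hasDerivAt_pow 2 t).const_mul (L / 2)).mul_const (‖d‖ ^ 2))).congr_deriv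
      (by simp only [Nat.cast_ofNat, Nat.add_one_sub_one, pow_one]; ring)
  have := image_le_of_deriv_right_le_deriv_boundary (a := 0) (b := 1)
    (fun t ht ↦ (hderiv t ht).continuousAt.continuousWithinAt)
    (fun t ht ↦ (hderiv t (Ico_subset_Icc_self ht)).hasDerivWithinAt)
    (by simp) (fun t _ ↦ (hB t).continuousAt.continuousWithinAt)
    (fun t _ ↦ (hB t).hasDerivWithinAt)
    (fun t ht ↦ hbound t (Ico_subset_Icc_self ht)) (right_mem_Icc.2 zero_le_one)
  simpa [d] using this

theorem HasFDerivAt.bregman {ω : E → ℝ} {ω' ℓ : E →L[ℝ] ℝ} (hω : HasFDerivAt ω ω' y) (x : E) :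
    HasFDerivAt (fun z ↦ ω z - ω x - ℓ (z - x)) (ω' - ℓ) y :=
  ((hω.sub_const (ω x)).sub (ℓ.hasFDerivAt.sub_const (ℓ x))).congr_of_eventuallyEq
    (.of_forall fun z ↦ by simp)

end FirstOrder

theorem mul_sub_half_mul_sq_le {μ : ℝ} (hμ : 0 < μ) (a s : ℝ) :
    a * s - μ / 2 * s ^ 2 ≤ a ^ 2 / (2 * μ) := by
  rw [le_div_iff₀ (by positivity)]
  nlinarith [sq_nonneg (μ * s - a)]

theorem half_mul_sq_add_mul_sub_le {μ L lam : ℝ} (hμ : 0 < μ) (hLμ : μ ≤ L) (hlam : 0 < lam)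
    (hlamL : lam ≤ 1 / L) (g a b s : ℝ) :
    L / 2 * (lam * g) ^ 2 + ((a + b) * s - μ / 2 * s ^ 2) ≤
      3 * (b ^ 2 + g ^ 2 + a ^ 2) / (2 * μ) := by
  have hLlam : L * lam ^ 2 ≤ μ⁻¹ := by
    have hlamL' : L * lam ≤ 1 := by rwa [le_div_iff₀ (hμ.trans_le hLμ), mul_comm] at hlamL
    calc L * lam ^ 2 = L * lam * lam := by ring
      _ ≤ lam := mul_le_of_le_one_left hlam.le hlamL'
      _ ≤ μ⁻¹ := hlamL.trans (by rw [one_div]; exact inv_anti₀ hμ hLμ)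
  calc L / 2 * (lam * g) ^ 2 + ((a + b) * s - μ / 2 * s ^ 2)
      ≤ L * lam ^ 2 * g ^ 2 / 2 + (a + b) ^ 2 / (2 * μ) := by
        linarith [mul_sub_half_mul_sq_le hμ (a + b) s]
    _ ≤ μ⁻¹ * g ^ 2 / 2 + 2 * (a ^ 2 + b ^ 2) / (2 * μ) := by
        gcongr
        nlinarith [sq_nonneg (a - b)]
    _ ≤ 3 * (b ^ 2 + g ^ 2 + a ^ 2) / (2 * μ) := by
        rw [inv_mul_eq_div, div_div, mul_comm μ, ← add_div]
        gcongr
        nlinarith [sq_nonneg g]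

theorem inexact_gradient_mapping_suboptimality_general
    {X : Type*} [NormedAddCommGroup X] [NormedSpace ℝ X]
    (𝒳 : Set X) (h𝒳cv : Convex ℝ 𝒳)
    (r : X → ℝ) (hrcv : ConvexOn ℝ 𝒳 r)
    (U : Set X) (hXU : 𝒳 ⊆ U)
    (ω : X → ℝ) (Dω : X → X →L[ℝ] ℝ)
    (hωsc : StrongConvexOn 𝒳 1 ω)
    (hωd : ∀ z ∈ U, HasFDerivAt ω (Dω z) z)
    (D : X → X → ℝ) (hD : ∀ x' x, D x' x = ω x' - ω x - Dω x (x' - x))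
    (μ : ℝ) (hμ : 0 < μ)
    (f : X → ℝ) (Df : X → X →L[ℝ] ℝ)
    (hfcv : ConvexOn ℝ 𝒳 f)
    (hfd : ∀ z ∈ U, HasFDerivAt f (Df z) z)
    (L : ℝ) (hLμ : μ ≤ L)
    (hfLip : ∀ z ∈ 𝒳, ∀ z' ∈ 𝒳, ‖Df z - Df z'‖ ≤ L * ‖z - z'‖)
    (p : X → ℝ) (hp : ∀ z, p z = f z + r z + μ * ω z)
    (xstar : X) (hxstar : xstar ∈ 𝒳)
    (lam : ℝ) (hlam : 0 < lam) (hlamL : lam ≤ 1 / L)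
    (xbar : X) (hxbar : xbar ∈ 𝒳)
    (e : X →L[ℝ] ℝ)
    (xplus : X) (hxplus : xplus ∈ 𝒳)
    (hxplusmin : ∀ z ∈ 𝒳,
      (Df xbar + e) xplus + r xplus + μ * ω xplus + lam⁻¹ * D xplus xbar ≤
        (Df xbar + e) z + r z + μ * ω z + lam⁻¹ * D z xbar)
    (G : X) (hG : G = lam⁻¹ • (xbar - xplus))
    (Gbar : X →L[ℝ] ℝ) (hGbar : Gbar = lam⁻¹ • (Dω xbar - Dω xplus)) :
    p xplus - p xstar ≤ 3 * (‖Gbar‖ ^ 2 + ‖G‖ ^ 2 + ‖e‖ ^ 2) / (2 * μ) ∧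
    ∀ ε > (0 : ℝ), ‖Gbar‖ ^ 2 + ‖G‖ ^ 2 + ‖e‖ ^ 2 ≤ 2 * μ * ε / 3 →
      p xplus - p xstar ≤ ε := by
  have hωx := hωd xplus (hXU hxplus)
  have hdescent := h𝒳cv.le_add_fderiv_add_of_norm_fderiv_sub_le (fun z hz ↦ hfd z (hXU hz))
    (fun z hz ↦ hfLip z hz xbar hxbar) hxbar hxplus
  have hfconv := hfcv.add_fderiv_le (hfd xbar (hXU hxbar)) hxbar hxstar
  have hωconv := hωsc.add_fderiv_add_le hωx hxplus hxstar
  have hDx : HasFDerivAt (fun z ↦ D z xbar) (Dω xplus - Dω xbar) xplus := by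
    simpa only [hD] using hωx.bregman (ℓ := Dω xbar) xbar
  have hopt := IsMinOn.sub_le_fderiv_of_convexOn
    (h := fun z ↦ (Df xbar + e) z + μ * ω z + lam⁻¹ * D z xbar)
    (isMinOn_iff.2 fun z hz ↦ by linarith [hxplusmin z hz]) hrcv
    (((Df xbar + e).hasFDerivAt.add (hωx.const_mul μ)).add (hDx.const_mul lam⁻¹)) hxplus hxstar
  set d := xstar - xplus
  rw [show lam⁻¹ • (Dω xplus - Dω xbar) = -Gbar by rw [hGbar, smul_sub, smul_sub, neg_sub]] at hopt
  simp only [add_apply, neg_apply, smul_apply, smul_eq_mul] at hopt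
  have hDf_d : Df xbar d = Df xbar (xstar - xbar) - Df xbar (xplus - xbar) := by
    rw [← map_sub, sub_sub_sub_cancel_right]
  have he_d : e d ≤ ‖e‖ * ‖d‖ := le_of_abs_le (e.le_opNorm d)
  have hGbar_d : -(‖Gbar‖ * ‖d‖) ≤ Gbar d := neg_le_of_abs_le (Gbar.le_opNorm d)
  have hstep : ‖xplus - xbar‖ = lam * ‖G‖ := by
    rw [hG, norm_smul, norm_inv, Real.norm_of_nonneg hlam.le, norm_sub_rev,
      mul_inv_cancel_left₀ hlam.ne']
  rw [norm_sub_rev] at hωconv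
  rw [hstep] at hdescent
  have hkey : p xplus - p xstar ≤
      L / 2 * (lam * ‖G‖) ^ 2 + ((‖e‖ + ‖Gbar‖) * ‖d‖ - μ / 2 * ‖d‖ ^ 2) := by
    rw [hp, hp]
    linarith [mul_le_mul_of_nonneg_left hωconv hμ.le]
  have main := hkey.trans (half_mul_sq_add_mul_sub_le hμ hLμ hlam hlamL ‖G‖ ‖e‖ ‖Gbar‖ ‖d‖)
  exact ⟨main, fun ε _ hsmall ↦ main.trans (by rw [div_le_iff₀ (by positivity)]; linarith)⟩

/-- Inexact gradient mapping implies near-optimality: for `0 < λ ≤ 1/L'_ρ`, with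
`x⁺ = argmin_{x∈𝒳} [⟨∇f̄_ρ(x̄)+e, x⟩ + r(x) + μω_𝒳(x) + λ⁻¹D_{ω_𝒳}(x,x̄)]`,
`G = (x̄-x⁺)/λ` and `Ḡ = (∇ω_𝒳(x̄)-∇ω_𝒳(x⁺))/λ`, one has
`p_ρ(x⁺) - p_ρ(x*_ρ) ≤ 3(‖Ḡ‖² + ‖G‖² + ‖e‖²)/(2μ)`; in particular, if
`‖Ḡ‖² + ‖G‖² + ‖e‖² ≤ 2με/3` then `p_ρ(x⁺) - min_{𝒳} p_ρ ≤ ε`. -/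
theorem inexact_gradient_mapping_suboptimality
    {X : Type*} [NormedAddCommGroup X] [NormedSpace ℝ X] [FiniteDimensional ℝ X]
    (𝒳 : Set X) (h𝒳ne : 𝒳.Nonempty) (h𝒳cl : IsClosed 𝒳) (h𝒳cv : Convex ℝ 𝒳)
    (r : X → ℝ) (hrcv : ConvexOn ℝ 𝒳 r) (hrlsc : LowerSemicontinuousOn r 𝒳)
    (U : Set X) (hU : IsOpen U) (hXU : 𝒳 ⊆ U)
    (ω : X → ℝ) (Dω : X → X →L[ℝ] ℝ)
    (hωc : ContinuousOn ω 𝒳) (hωsc : StrongConvexOn 𝒳 1 ω)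
    (hωd : ∀ z ∈ U, HasFDerivAt ω (Dω z) z)
    (D : X → X → ℝ) (hD : ∀ x' x, D x' x = ω x' - ω x - Dω x (x' - x))
    (μ : ℝ) (hμ : 0 < μ)
    (f : X → ℝ) (Df : X → X →L[ℝ] ℝ)
    (hfcv : ConvexOn ℝ 𝒳 f)
    (hfd : ∀ z ∈ U, HasFDerivAt f (Df z) z)
    (L : ℝ) (hLμ : μ ≤ L)
    (hfLip : ∀ z ∈ 𝒳, ∀ z' ∈ 𝒳, ‖Df z - Df z'‖ ≤ L * ‖z - z'‖)
    (p : X → ℝ) (hp : ∀ z, p z = f z + r z + μ * ω z)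
    (hpsc : StrongConvexOn 𝒳 μ p)
    (xstar : X) (hxstar : xstar ∈ 𝒳)
    (hxstarmin : ∀ z ∈ 𝒳, p xstar ≤ p z)
    (hxstaruniq : ∀ z ∈ 𝒳, p z = p xstar → z = xstar)
    (lam : ℝ) (hlam : 0 < lam) (hlamL : lam ≤ 1 / L)
    (xbar : X) (hxbar : xbar ∈ 𝒳)
    (e : X →L[ℝ] ℝ)
    (xplus : X) (hxplus : xplus ∈ 𝒳)
    (hxplusmin : ∀ z ∈ 𝒳,
      (Df xbar + e) xplus + r xplus + μ * ω xplus + lam⁻¹ * D xplus xbar ≤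
        (Df xbar + e) z + r z + μ * ω z + lam⁻¹ * D z xbar)
    (hxplusuniq : ∀ z ∈ 𝒳,
      (Df xbar + e) z + r z + μ * ω z + lam⁻¹ * D z xbar =
        (Df xbar + e) xplus + r xplus + μ * ω xplus + lam⁻¹ * D xplus xbar → z = xplus)
    (G : X) (hG : G = lam⁻¹ • (xbar - xplus))
    (Gbar : X →L[ℝ] ℝ) (hGbar : Gbar = lam⁻¹ • (Dω xbar - Dω xplus)) :
    p xplus - p xstar ≤ 3 * (‖Gbar‖ ^ 2 + ‖G‖ ^ 2 + ‖e‖ ^ 2) / (2 * μ) ∧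
    ∀ ε > (0 : ℝ), ‖Gbar‖ ^ 2 + ‖G‖ ^ 2 + ‖e‖ ^ 2 ≤ 2 * μ * ε / 3 →
      p xplus - p xstar ≤ ε :=
  inexact_gradient_mapping_suboptimality_general 𝒳 h𝒳cv r hrcv U hXU ω Dω hωsc hωd D hD μ hμ f Df
    hfcv hfd L hLμ hfLip p hp xstar hxstar lam hlam hlamL xbar hxbar e xplus hxplus hxplusmin G hG
    Gbar hGbar
end
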